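/- arXiv:1702.04475 — 5 statements merged into one kernel-verified Lean document; each statement's English description precedes it below -/
import Mathlib

section
/- Let T be a triangulated category, S a thick subcategory with a torsion pair S = X ⊥ Y, and suppose T has torsion pairs T = X ⊥ X^⊥ = ^⊥Y ⊥ Y. Then for every object T₀ of T there exists an object Z₀ in Z := X^⊥ ∩ ^⊥(Y[1]) such that T₀ and Z₀ become isomorphic in the Verdier quotient U = T/S. -/
open CategoryTheory Limits Pretriangulated ZeroObject

namespace IY

variable {T : Type*} [Category T] [Preadditive T] [HasZeroObject T] [HasShift T ℤ]
  [∀ n : ℤ, (shiftFunctor T n).Additive] [Pretriangulated T]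

/-- Right Hom-orthogonal: `A^⊥`. -/
def rightPerp (A : Set T) : Set T := {Y | ∀ X ∈ A, ∀ f : X ⟶ Y, f = 0}

/-- Left Hom-orthogonal: `^⊥B`. -/
def leftPerp (B : Set T) : Set T := {X | ∀ Y ∈ B, ∀ f : X ⟶ Y, f = 0}

/-- The shift `A[n]` of a class of objects. -/
def shiftSet (A : Set T) (n : ℤ) : Set T := (fun X => (X⟦n⟧ : T)) '' A

/-- `Hom(A, B) = 0`. -/
def homOrth (A B : Set T) : Prop := ∀ X ∈ A, ∀ Y ∈ B, ∀ f : X ⟶ Y, f = 0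

/-- `A * B`: objects `E` admitting a distinguished triangle `A → E → B → A[1]`
with `A ∈ A`, `B ∈ B`. -/
def starSet (A B : Set T) : Set T :=
  {E | ∃ (a b : T) (_ : a ∈ A) (_ : b ∈ B) (f : a ⟶ E) (g : E ⟶ b)
    (h : b ⟶ a⟦(1 : ℤ)⟧), Triangle.mk f g h ∈ distTriang T}

/-- A torsion pair `S = A ⊥ B` on the class of objects `S`:
`S = A * B`, `Hom(A,B) = 0`, `A = ^⊥B ∩ S` and `B = A^⊥ ∩ S`. -/
structure IsTorsionPair (S A B : Set T) : Prop where
  subA : A ⊆ S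
  subB : B ⊆ S
  orth : homOrth A B
  ext : S ⊆ starSet A B
  eqA : A = leftPerp B ∩ S
  eqB : B = rightPerp A ∩ S

/-- A thick subcategory: closed under isomorphisms, shifts, extensions (cones) and
direct summands (retracts), and contains the zero object. -/
structure IsThick (S : Set T) : Prop where
  zero : (0 : T) ∈ S
  iso : ∀ ⦃X Y : T⦄, (X ≅ Y) → X ∈ S → Y ∈ S
  shift : ∀ X ∈ S, ∀ n : ℤ, (X⟦n⟧ : T) ∈ S
  ext₂ : ∀ Tr : Triangle T, Tr ∈ (distTriang T) → Tr.obj₁ ∈ S → Tr.obj₃ ∈ S → Tr.obj₂ ∈ S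
  retract : ∀ ⦃X Y : T⦄ (i : X ⟶ Y) (r : Y ⟶ X), i ≫ r = 𝟙 X → Y ∈ S → X ∈ S

/-- The class of morphisms whose cone lies in `S`; the Verdier quotient `T/S` is the
localization of `T` at this class. -/
def qis (S : Set T) : MorphismProperty T := fun X Y f =>
  ∃ (Z : T) (g : Y ⟶ Z) (h : Z ⟶ X⟦(1 : ℤ)⟧),
    Triangle.mk f g h ∈ (distTriang T) ∧ Z ∈ S

/-- A morphism factors through an object of `P`. -/
def factorsThrough (P : Set T) {M N : T} (f : M ⟶ N) : Prop :=
  ∃ (P₀ : T) (_ : P₀ ∈ P) (g : M ⟶ P₀) (h : P₀ ⟶ N), g ≫ h = f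

/-
Split `T₀` along `X ⊥ X^⊥` as `x₀ → T₀ → t → x₀[1]`, and split `t[-1]` along `^⊥Y ⊥ Y` as
`a → t[-1] → b → a[1]`. Both `x₀` and `b` lie in `S`, so `T₀ → t` and `a[1] → t[-1][1] ≅ t`
become invertible in `T/S`. The object `a[1]` lies in `^⊥(Y[1])` because `a ∈ ^⊥Y`, and in
`X^⊥` because it is an extension of `t[-1][1] ≅ t ∈ X^⊥` by `b ∈ Y ⊆ X^⊥`.
-/

omit [HasZeroObject T] [HasShift T ℤ] [∀ n : ℤ, (shiftFunctor T n).Additive]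
  [Pretriangulated T] in
lemma mem_rightPerp_of_iso {A : Set T} {E F : T} (e : E ≅ F) (hE : E ∈ rightPerp A) :
    F ∈ rightPerp A := fun x hx f => by
  rw [← cancel_mono e.inv, zero_comp]
  exact hE x hx _

lemma obj₂_mem_rightPerp {A : Set T} (Tr : Triangle T) (hTr : Tr ∈ distTriang T)
    (h₁ : Tr.obj₁ ∈ rightPerp A) (h₃ : Tr.obj₃ ∈ rightPerp A) : Tr.obj₂ ∈ rightPerp A := by
  intro x hx f
  obtain ⟨g, rfl⟩ := Triangle.coyoneda_exact₂ Tr hTr f (h₃ x hx _)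
  rw [h₁ x hx g, zero_comp]

omit [HasZeroObject T] [Pretriangulated T] in
lemma shift_mem_leftPerp_shiftSet {B : Set T} {E : T} (hE : E ∈ leftPerp B) (n : ℤ) :
    E⟦n⟧ ∈ leftPerp (shiftSet B n) := by
  rintro _ ⟨y, hy, rfl⟩ f
  rw [← (shiftFunctor T n).map_preimage f, hE y hy ((shiftFunctor T n).preimage f),
    Functor.map_zero]

lemma qis_mor₁ {S : Set T} (Tr : Triangle T) (hTr : Tr ∈ distTriang T) (h₃ : Tr.obj₃ ∈ S) :
    qis S Tr.mor₁ :=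
  ⟨_, Tr.mor₂, Tr.mor₃, hTr, h₃⟩

lemma qis_mor₂ {S : Set T} (hS : IsThick S) (Tr : Triangle T) (hTr : Tr ∈ distTriang T)
    (h₁ : Tr.obj₁ ∈ S) : qis S Tr.mor₂ :=
  qis_mor₁ _ (rot_of_distTriang _ hTr) (hS.shift _ h₁ 1)

/-- Every object of `T` becomes isomorphic in the Verdier quotient
`U = T/S` to an object of `Z = X^⊥ ∩ ^⊥(Y[1])`. -/
theorem stmt1 {U : Type*} [Category U] (S X Y : Set T) (Q : T ⥤ U)
    [Q.IsLocalization (qis S)] (hS : IsThick S)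
    (h1 : IsTorsionPair S X Y)
    (h2 : IsTorsionPair Set.univ X (rightPerp X))
    (h3 : IsTorsionPair Set.univ (leftPerp Y) Y) (T₀ : T) :
    ∃ Z₀ ∈ rightPerp X ∩ leftPerp (shiftSet Y 1), Nonempty (Q.obj T₀ ≅ Q.obj Z₀) := by
  obtain ⟨x₀, t, hx₀, ht, f₁, g₁, h₁, hTr₁⟩ := h2.ext (Set.mem_univ T₀)
  obtain ⟨a, b, ha, hb, f₂, g₂, h₂, hTr₂⟩ := h3.ext (Set.mem_univ (t⟦(-1 : ℤ)⟧))
  have e : t⟦(-1 : ℤ)⟧⟦(1 : ℤ)⟧ ≅ t := shiftNegShift t 1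
  have hb_perp : b ∈ rightPerp X := (h1.eqB ▸ hb).1
  have ha_perp : a⟦(1 : ℤ)⟧ ∈ rightPerp X :=
    obj₂_mem_rightPerp _ (rot_of_distTriang _ (rot_of_distTriang _ hTr₂)) hb_perp
      (mem_rightPerp_of_iso e.symm ht)
  have : IsIso (Q.map g₁) :=
    Localization.inverts Q (qis S) _ (qis_mor₂ hS _ hTr₁ (h1.subA hx₀))
  have : IsIso (Q.map ((Triangle.mk f₂ g₂ h₂)⟦(1 : ℤ)⟧).mor₁) :=
    Localization.inverts Q (qis S) _
      (qis_mor₁ _ (Triangle.shift_distinguished _ hTr₂ 1) (hS.shift _ (h1.subB hb) 1))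
  exact ⟨a⟦(1 : ℤ)⟧, ⟨ha_perp, shift_mem_leftPerp_shiftSet ha 1⟩,
    ⟨asIso (Q.map g₁) ≪≫ Q.mapIso e.symm ≪≫
      (asIso (Q.map ((Triangle.mk f₂ g₂ h₂)⟦(1 : ℤ)⟧).mor₁)).symm⟩⟩

end IY
end

section
/- Let T be a triangulated category, S a thick subcategory with a co-t-structure S = X ⊥ Y (torsion pair with X[1] ⊆ X), and T with torsion pairs T = X ⊥ X^⊥ = ^⊥Y ⊥ Y. Set Z := X^⊥ ∩ ^⊥(Y[1]) and P := X[1] ∩ Y. Then P ⊆ Z and Hom_T(P, Z[1]) = 0 = Hom_T(Z, P[1]). -/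
open CategoryTheory Limits Pretriangulated ZeroObject

namespace IY

variable {T : Type*} [Category T] [Preadditive T] [HasZeroObject T] [HasShift T ℤ]
  [∀ n : ℤ, (shiftFunctor T n).Additive] [Pretriangulated T]

theorem shiftSet_mono {C : Type*} [Category C] [HasShift C ℤ] {A B : Set C} (h : A ⊆ B)
    (n : ℤ) : shiftSet A n ⊆ shiftSet B n :=
  Set.image_mono h

section

variable {C : Type*} [Category C] [Preadditive C]

theorem homOrth.mono {A A' B B' : Set C} (h : homOrth A B) (hA : A' ⊆ A) (hB : B' ⊆ B) :
    homOrth A' B' :=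
  fun x hx y hy => h x (hA hx) y (hB hy)

theorem homOrth_rightPerp (A : Set C) : homOrth A (rightPerp A) :=
  fun x hx _ hy => hy x hx

variable [HasShift C ℤ] [∀ n : ℤ, (shiftFunctor C n).Additive]

theorem eq_zero_of_shift {x y : C} (n : ℤ) (h : ∀ g : x ⟶ y, g = 0) (f : x⟦n⟧ ⟶ y⟦n⟧) :
    f = 0 := by
  rw [← (shiftFunctor C n).map_preimage f, h ((shiftFunctor C n).preimage f), Functor.map_zero]

theorem homOrth.shiftSet {A B : Set C} (h : homOrth A B) (n : ℤ) :
    homOrth (shiftSet A n) (shiftSet B n) := by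
  rintro _ ⟨x, hx, rfl⟩ _ ⟨y, hy, rfl⟩
  exact eq_zero_of_shift n (h x hx y hy)

end

theorem stmt4_general (S X Y : Set T)
    (h1 : IsTorsionPair S X Y) :
    shiftSet X 1 ∩ Y ⊆ rightPerp X ∩ leftPerp (shiftSet Y 1) ∧
    homOrth (shiftSet X 1 ∩ Y) (shiftSet (rightPerp X ∩ leftPerp (shiftSet Y 1)) 1) ∧
    homOrth (rightPerp X ∩ leftPerp (shiftSet Y 1)) (shiftSet (shiftSet X 1 ∩ Y) 1) := by
  refine ⟨fun p ⟨hpX, hpY⟩ => ⟨?_, ?_⟩, ?_, ?_⟩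
  · exact fun x hx => h1.orth x hx p hpY
  · exact fun y hy => h1.orth.shiftSet 1 p hpX y hy
  · exact ((homOrth_rightPerp X).shiftSet 1).mono Set.inter_subset_left
      (shiftSet_mono Set.inter_subset_left 1)
  · exact fun z hz _ ⟨p, hp, hpz⟩ => hz.2 _ ⟨p, hp.2, hpz⟩

/-- In the co-t-structure case, `P ⊆ Z` and
`Hom(P, Z[1]) = 0 = Hom(Z, P[1])`, where `Z = X^⊥ ∩ ^⊥(Y[1])` and `P = X[1] ∩ Y`. -/
theorem stmt4 (S X Y : Set T) (hS : IsThick S)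
    (h1 : IsTorsionPair S X Y) (hco : shiftSet X 1 ⊆ X)
    (h2 : IsTorsionPair Set.univ X (rightPerp X))
    (h3 : IsTorsionPair Set.univ (leftPerp Y) Y) :
    shiftSet X 1 ∩ Y ⊆ rightPerp X ∩ leftPerp (shiftSet Y 1) ∧
    homOrth (shiftSet X 1 ∩ Y) (shiftSet (rightPerp X ∩ leftPerp (shiftSet Y 1)) 1) ∧
    homOrth (rightPerp X ∩ leftPerp (shiftSet Y 1)) (shiftSet (shiftSet X 1 ∩ Y) 1) :=
  stmt4_general S X Y h1

end IY
end

section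
/- Let T be a triangulated category, S a thick subcategory with a stable t-structure S = X ⊥ Y (a torsion pair with X[1] = X), and T with torsion pairs T = X ⊥ X^⊥ = ^⊥Y ⊥ Y. Then X, Y and Z := X^⊥ ∩ ^⊥Y are thick subcategories of T, P := X[1] ∩ Y = 0, T = X ⊥ Z ⊥ Y is a weak semi-orthogonal decomposition, and the composition Z ⊂ T → T/S is a triangle equivalence. -/
/-!
The inclusion of `X^⊥` has a left adjoint `L` and that of `^⊥Y` a right adjoint `R`: in the
triangles `x → A → w → x⟦1⟧` and `l → A → y → l⟦1⟧` the maps `A → w` and `l → A` are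
`X^⊥`-local and `^⊥Y`-colocal, having cones in `X` and `Y`. Since `R` preserves `X^⊥`,
`A ↦ R (L A)` is a functor `T ⥤ Z`; it is the identity on `Z`, and the maps `A → L A ← R (L A)`
are inverted in `T/S` since their cones lie in `X ⊆ S` and `Y ⊆ S`.
It remains that `R ∘ L` inverts a morphism `f` with cone `s ∈ S ⊆ X * Y`. The five lemma for
`Hom(-, X^⊥)` makes the comparison of `s` with the cone of `L f` `X^⊥`-local; so is `s → y` for
`x → s → y` with `y ∈ Y ⊆ X^⊥`, so the cone of `L f` is `y`, and `R` inverts morphisms with cone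
in `Y`. Thickness of `X`, `Y`, `Z` comes from `X⟦1⟧ = X`, the orthogonal of a shift-stable class
being thick.
-/

open CategoryTheory Limits Pretriangulated ZeroObject

namespace IY

variable {T : Type*} [Category T] [Preadditive T] [HasZeroObject T] [HasShift T ℤ]
  [∀ n : ℤ, (shiftFunctor T n).Additive] [Pretriangulated T]

section Reflections

variable {C D : Type*} [Category C] [Category D]

lemma isLocal_map_of_adjunction {P : ObjectProperty C} {P' : ObjectProperty D} {F : C ⥤ D}
    {G : D ⥤ C} (adj : F ⊣ G) (hG : ∀ B, P' B → P (G.obj B)) {A₁ A₂ : C} {f : A₁ ⟶ A₂}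
    (hf : P.isLocal f) : P'.isLocal (F.map f) := by
  intro B hB
  have : (fun g : F.obj A₂ ⟶ B => F.map f ≫ g) =
      (adj.homEquiv A₁ B).symm ∘ (fun g => f ≫ g) ∘ adj.homEquiv A₂ B := by
    funext g
    simp [← Adjunction.homEquiv_naturality_left]
  rw [this]
  exact (adj.homEquiv A₁ B).symm.bijective.comp
    ((hf _ (hG B hB)).comp (adj.homEquiv A₂ B).bijective)

lemma isLocal_shift [HasShift C ℤ] {P : ObjectProperty C} [P.IsStableUnderShift ℤ] {A B : C}
    {f : A ⟶ B} (hf : P.isLocal f) (n : ℤ) : P.isLocal (f⟦n⟧') :=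
  isLocal_map_of_adjunction (shiftEquiv C n).toAdjunction (fun w hw => P.le_shift (-n) w hw) hf

lemma exists_iso_of_isLocal {P : ObjectProperty C} {A B B' : C} {π : A ⟶ B} {π' : A ⟶ B'}
    (hπ : P.isLocal π) (hπ' : P.isLocal π') (hB : P B) (hB' : P B') :
    ∃ e : B ≅ B', π ≫ e.hom = π' := by
  obtain ⟨u, hu : π ≫ u = π'⟩ := (hπ B' hB').2 π'
  have : IsIso u := (P.isLocal_iff_isIso u hB hB').1 (P.isLocal.of_precomp π u hπ (hu ▸ hπ'))
  exact ⟨asIso u, hu⟩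

lemma exists_iso_of_isColocal {P : ObjectProperty C} {A A' B : C} {ι : A ⟶ B} {ι' : A' ⟶ B}
    (hι : P.isColocal ι) (hι' : P.isColocal ι') (hA : P A) (hA' : P A') :
    ∃ e : A' ≅ A, e.hom ≫ ι = ι' := by
  obtain ⟨u, hu : u ≫ ι = ι'⟩ := (hι A' hA').2 ι'
  have : IsIso u :=
    (P.isColocal_iff_isIso u hA' hA).1 (P.isColocal.of_postcomp u ι hι (hu ▸ hι'))
  exact ⟨asIso u, hu⟩

lemma range_ι_obj (P : ObjectProperty C) : (· ∈ Set.range P.ι.obj) = P := by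
  ext A
  exact ⟨fun ⟨B, hB⟩ => hB ▸ B.property, fun hA => ⟨⟨A, hA⟩, rfl⟩⟩

lemma isLocal_unit_app {P : ObjectProperty C} {L : C ⥤ P.FullSubcategory} (adj : L ⊣ P.ι)
    (A : C) : P.isLocal (adj.unit.app A) := by
  simpa only [range_ι_obj] using ObjectProperty.isLocal_adj_unit_app adj A

lemma isColocal_counit_app {P : ObjectProperty C} {R : C ⥤ P.FullSubcategory} (adj : P.ι ⊣ R)
    (A : C) : P.isColocal (adj.counit.app A) := by
  simpa only [range_ι_obj] using ObjectProperty.isColocal_adj_counit_app adj A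

lemma isRightAdjoint_ι_of_isLocal (P : ObjectProperty C)
    (h : ∀ A : C, ∃ (B : C) (π : A ⟶ B), P B ∧ P.isLocal π) : P.ι.IsRightAdjoint := by
  choose r π hr hπ using h
  exact (Adjunction.adjunctionOfEquivLeft (G := P.ι) (F_obj := fun A => ⟨r A, hr A⟩)
    (fun A B => InducedCategory.homEquiv.trans ((hπ A).homEquiv B.obj B.property))
    (fun _ _ _ _ _ => (Category.assoc _ _ _).symm)).isRightAdjoint

lemma isLeftAdjoint_ι_of_isColocal (P : ObjectProperty C)
    (h : ∀ B : C, ∃ (A : C) (ι : A ⟶ B), P A ∧ P.isColocal ι) : P.ι.IsLeftAdjoint := by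
  choose r ι hr hι using h
  have hι_symm {A B : C} (hA : P A) (u : A ⟶ B) : ((hι B).homEquiv A hA).symm u ≫ ι B = u :=
    ((hι B).homEquiv A hA).apply_symm_apply u
  exact (Adjunction.adjunctionOfEquivRight (F := P.ι) (G_obj := fun B => ⟨r B, hr B⟩)
    (fun A B => ((hι B).homEquiv A.obj A.property).symm.trans
      (InducedCategory.homEquiv (X := A) (Y := ⟨r B, hr B⟩)).symm)
    (fun A _ B _ _ => by
      ext
      apply (hι B A.obj A.property).1
      simp [InducedCategory.homEquiv, hι_symm])).isLeftAdjoint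

end Reflections

section Triangles

open ObjectProperty Preadditive

lemma exact_leftComp_of_distTriang {Tr : Triangle T} (hTr : Tr ∈ distTriang T) (w : T) :
    Function.Exact (leftComp w Tr.mor₂) (leftComp w Tr.mor₁) := by
  intro g
  constructor
  · intro hg
    obtain ⟨g', rfl⟩ := Triangle.yoneda_exact₂ Tr hTr g hg
    exact ⟨g', rfl⟩
  · rintro ⟨g', rfl⟩
    simp [leftComp, comp_distTriang_mor_zero₁₂_assoc _ hTr]

lemma isLocal₃_of_isLocal₁₂ {P : ObjectProperty T} [P.IsStableUnderShift ℤ]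
    {T₁ T₂ : Triangle T} (φ : T₁ ⟶ T₂) (h₁ : T₁ ∈ distTriang T) (h₂ : T₂ ∈ distTriang T)
    (hφ₁ : P.isLocal φ.hom₁) (hφ₂ : P.isLocal φ.hom₂) : P.isLocal φ.hom₃ := by
  intro w hw
  -- the five lemma for the exact rows `Hom(Tᵢ.obj₂⟦1⟧, w) → Hom(Tᵢ.obj₁⟦1⟧, w) → Hom(Tᵢ.obj₃, w)
  -- → Hom(Tᵢ.obj₂, w) → Hom(Tᵢ.obj₁, w)` of the triangles `Tᵢ.rotate.rotate`, `Tᵢ.rotate`, `Tᵢ`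
  exact AddMonoidHom.bijective_of_surjective_of_bijective_of_bijective_of_injective
    (leftComp w T₂.rotate.rotate.mor₂) (leftComp w T₂.mor₃) (leftComp w T₂.mor₂)
    (leftComp w T₂.mor₁) (leftComp w T₁.rotate.rotate.mor₂) (leftComp w T₁.mor₃)
    (leftComp w T₁.mor₂) (leftComp w T₁.mor₁) (leftComp w (φ.hom₂⟦1⟧'))
    (leftComp w (φ.hom₁⟦1⟧')) (leftComp w φ.hom₃) (leftComp w φ.hom₂) (leftComp w φ.hom₁)
    (by ext g; exact ((rotate T).map ((rotate T).map φ)).comm₂_assoc g)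
    (by ext g; exact φ.comm₃_assoc g) (by ext g; exact φ.comm₂_assoc g)
    (by ext g; exact φ.comm₁_assoc g)
    (exact_leftComp_of_distTriang (rot_of_distTriang _ (rot_of_distTriang _ h₂)) w)
    (exact_leftComp_of_distTriang (rot_of_distTriang _ h₂) w)
    (exact_leftComp_of_distTriang h₂ w)
    (exact_leftComp_of_distTriang (rot_of_distTriang _ (rot_of_distTriang _ h₁)) w)
    (exact_leftComp_of_distTriang (rot_of_distTriang _ h₁) w)
    (exact_leftComp_of_distTriang h₁ w)
    (isLocal_shift hφ₂ 1 w hw).2 (isLocal_shift hφ₁ 1 w hw) (hφ₂ w hw) (hφ₁ w hw).1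

lemma trW_le_isLocal_rightOrthogonal (P : ObjectProperty T) [P.IsTriangulated] :
    P.trW ≤ P.rightOrthogonal.isLocal :=
  (le_isLocal_iff _ _).2 (isLocal_trW P).ge

lemma trW_le_isColocal_leftOrthogonal (P : ObjectProperty T) [P.IsTriangulated] :
    P.trW ≤ P.leftOrthogonal.isColocal :=
  (le_isColocal_iff _ _).2 (isColocal_trW P).ge

lemma prop_of_trW {P Q : ObjectProperty T} [P.IsTriangulated] [P.IsClosedUnderIsomorphisms]
    (hQP : Q ≤ P) {A B : T} {f : A ⟶ B} (hf : Q.trW f) (hB : P B) : P A := by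
  obtain ⟨C, g, h, hT, hC⟩ := hf
  exact P.ext_of_isTriangulatedClosed₁ _ hT hB (hQP _ hC)

end Triangles

section Decomposition

open ObjectProperty

variable {X Y : ObjectProperty T}

lemma exists_trW_of_extensionProduct_rightOrthogonal [X.IsStableUnderShift ℤ]
    (hX : ∀ A, X.extensionProduct X.rightOrthogonal A) (A : T) :
    ∃ (w : T) (π : A ⟶ w), X.rightOrthogonal w ∧ X.trW π := by
  obtain ⟨x, w, i, π, δ, hT, hx, hw⟩ := hX A
  exact ⟨w, π, hw, trW.mk' X hT hx⟩

lemma exists_trW_of_extensionProduct_leftOrthogonal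
    (hY : ∀ A, Y.leftOrthogonal.extensionProduct Y A) (A : T) :
    ∃ (l : T) (ι : l ⟶ A), Y.leftOrthogonal l ∧ Y.trW ι := by
  obtain ⟨l, y, ι, p, δ, hT, hl, hy⟩ := hY A
  exact ⟨l, ι, hl, trW.mk Y hT hy⟩

lemma isRightAdjoint_ι_rightOrthogonal [X.IsTriangulated]
    (hX : ∀ A, X.extensionProduct X.rightOrthogonal A) : X.rightOrthogonal.ι.IsRightAdjoint :=
  isRightAdjoint_ι_of_isLocal _ fun A =>
    let ⟨w, π, hw, hπ⟩ := exists_trW_of_extensionProduct_rightOrthogonal hX A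
    ⟨w, π, hw, trW_le_isLocal_rightOrthogonal X _ hπ⟩

lemma isLeftAdjoint_ι_leftOrthogonal [Y.IsTriangulated]
    (hY : ∀ A, Y.leftOrthogonal.extensionProduct Y A) : Y.leftOrthogonal.ι.IsLeftAdjoint :=
  isLeftAdjoint_ι_of_isColocal _ fun A =>
    let ⟨l, ι, hl, hι⟩ := exists_trW_of_extensionProduct_leftOrthogonal hY A
    ⟨l, ι, hl, trW_le_isColocal_leftOrthogonal Y _ hι⟩

lemma trW_unit_app [X.IsTriangulated] (hX : ∀ A, X.extensionProduct X.rightOrthogonal A)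
    {L : T ⥤ X.rightOrthogonal.FullSubcategory} (adj : L ⊣ X.rightOrthogonal.ι) (A : T) :
    X.trW (adj.unit.app A) := by
  obtain ⟨w, π, hw, hπ⟩ := exists_trW_of_extensionProduct_rightOrthogonal hX A
  obtain ⟨e, he⟩ := exists_iso_of_isLocal (trW_le_isLocal_rightOrthogonal X _ hπ)
    (isLocal_unit_app adj A) hw (L.obj A).property
  rw [← he]
  exact MorphismProperty.RespectsIso.postcomp _ e.hom π hπ

lemma trW_counit_app [Y.IsTriangulated] (hY : ∀ A, Y.leftOrthogonal.extensionProduct Y A)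
    {R : T ⥤ Y.leftOrthogonal.FullSubcategory} (adj : Y.leftOrthogonal.ι ⊣ R) (A : T) :
    Y.trW (adj.counit.app A) := by
  obtain ⟨l, ι, hl, hι⟩ := exists_trW_of_extensionProduct_leftOrthogonal hY A
  obtain ⟨e, he⟩ := exists_iso_of_isColocal (trW_le_isColocal_leftOrthogonal Y _ hι)
    (isColocal_counit_app adj A) hl (R.obj A).property
  rw [← he]
  exact MorphismProperty.RespectsIso.precomp _ e.hom ι hι

lemma extensionProduct_inf_extensionProduct [X.IsTriangulated]
    (hX : ∀ A, X.extensionProduct X.rightOrthogonal A)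
    (hY : ∀ A, Y.leftOrthogonal.extensionProduct Y A) (hYX : Y ≤ X.rightOrthogonal) (A : T) :
    X.extensionProduct ((X.rightOrthogonal ⊓ Y.leftOrthogonal).extensionProduct Y) A := by
  obtain ⟨x, w, i, π, δ, hT, hx, hw⟩ := hX A
  obtain ⟨l, y, ι, p, δ', hT', hl, hy⟩ := hY w
  exact ⟨x, w, i, π, δ, hT, hx, l, y, ι, p, δ', hT', ⟨prop_of_trW hYX (trW.mk Y hT' hy) hw, hl⟩, hy⟩

lemma trW_of_isLocal_of_extensionProduct [X.IsTriangulated] (hYX : Y ≤ X.rightOrthogonal)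
    {A B A' B' : T} {f : A ⟶ B} (hf : (X.extensionProduct Y).trW f)
    {a : A ⟶ A'} {b : B ⟶ B'} (ha : X.rightOrthogonal.isLocal a)
    (hb : X.rightOrthogonal.isLocal b) (hA' : X.rightOrthogonal A') (hB' : X.rightOrthogonal B')
    {f' : A' ⟶ B'} (comm : a ≫ f' = f ≫ b) : Y.trW f' := by
  obtain ⟨s, g, h, hT, x, y, i, q, δ, hs, hx, hy⟩ := hf
  obtain ⟨C', g', h', hT'⟩ := distinguished_cocone_triangle f'
  obtain ⟨γ, hγ₁, hγ₂⟩ := complete_distinguished_triangle_morphism _ _ hT hT' a b comm.symm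
  have hγ : X.rightOrthogonal.isLocal γ :=
    isLocal₃_of_isLocal₁₂ (T₁ := Triangle.mk f g h) (T₂ := Triangle.mk f' g' h')
      (Triangle.homMk _ _ a b γ comm.symm hγ₁ hγ₂) hT hT' ha hb
  obtain ⟨e, -⟩ := exists_iso_of_isLocal (trW_le_isLocal_rightOrthogonal X _ (trW.mk' X hs hx))
    hγ (hYX _ hy) (X.rightOrthogonal.ext_of_isTriangulatedClosed₃ _ hT' hA' hB')
  rw [← trW_isoClosure]
  exact ⟨C', g', h', hT', y, hy, ⟨e.symm⟩⟩

end Decomposition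

section MiddleProjection

open ObjectProperty

variable {X Y : ObjectProperty T} {L : T ⥤ X.rightOrthogonal.FullSubcategory}
  {R : T ⥤ Y.leftOrthogonal.FullSubcategory}

variable (L R) in
noncomputable def middleProjection
    (hR : ∀ w, X.rightOrthogonal w → X.rightOrthogonal (R.obj w).obj) :
    T ⥤ (X.rightOrthogonal ⊓ Y.leftOrthogonal).FullSubcategory :=
  (X.rightOrthogonal ⊓ Y.leftOrthogonal).lift (L ⋙ X.rightOrthogonal.ι ⋙ R ⋙ Y.leftOrthogonal.ι)
    fun A => ⟨hR _ (L.obj A).property, (R.obj _).property⟩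

lemma isIso_middleProjection_map [X.IsTriangulated] [Y.IsTriangulated]
    (adjL : L ⊣ X.rightOrthogonal.ι) (adjR : Y.leftOrthogonal.ι ⊣ R)
    (hR : ∀ w, X.rightOrthogonal w → X.rightOrthogonal (R.obj w).obj)
    (hYX : Y ≤ X.rightOrthogonal) {A B : T} {f : A ⟶ B} (hf : (X.extensionProduct Y).trW f) :
    IsIso ((middleProjection L R hR).map f) := by
  have hLf : Y.trW (L.map f).hom :=
    trW_of_isLocal_of_extensionProduct hYX hf (isLocal_unit_app adjL A)
      (isLocal_unit_app adjL B) (L.obj A).property (L.obj B).property (adjL.unit.naturality f).symm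
  have : IsIso (R.map (L.map f).hom) := (isColocal_iff_isIso_map adjR _).1
    (by simpa only [range_ι_obj] using trW_le_isColocal_leftOrthogonal Y _ hLf)
  have : IsIso ((X.rightOrthogonal ⊓ Y.leftOrthogonal).ι.map ((middleProjection L R hR).map f)) :=
    inferInstanceAs (IsIso (Y.leftOrthogonal.ι.map (R.map (L.map f).hom)))
  exact isIso_of_fully_faithful (X.rightOrthogonal ⊓ Y.leftOrthogonal).ι _

variable (adjL : L ⊣ X.rightOrthogonal.ι) (adjR : Y.leftOrthogonal.ι ⊣ R)
  (hR : ∀ w, X.rightOrthogonal w → X.rightOrthogonal (R.obj w).obj)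

noncomputable def ιCompMiddleProjectionIso :
    (X.rightOrthogonal ⊓ Y.leftOrthogonal).ι ⋙ middleProjection L R hR ≅ 𝟭 _ :=
  ((X.rightOrthogonal ⊓ Y.leftOrthogonal).fullyFaithfulι.whiskeringRight _).preimageIso
    (Functor.isoWhiskerLeft (ιOfLE inf_le_left) (Functor.isoWhiskerRight (asIso adjL.counit)
        (X.rightOrthogonal.ι ⋙ R ⋙ Y.leftOrthogonal.ι)) ≪≫
      Functor.isoWhiskerLeft (ιOfLE inf_le_right)
        (Functor.isoWhiskerRight (asIso adjR.unit).symm Y.leftOrthogonal.ι))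

noncomputable def middleProjectionCompιCompIso {U : Type*} [Category U] (Q : T ⥤ U)
    (hunit : ∀ A, IsIso (Q.map (adjL.unit.app A)))
    (hcounit : ∀ A, IsIso (Q.map (adjR.counit.app A))) :
    middleProjection L R hR ⋙ (X.rightOrthogonal ⊓ Y.leftOrthogonal).ι ⋙ Q ≅ Q :=
  @asIso _ _ _ _
      (Functor.whiskerRight (Functor.whiskerLeft (L ⋙ X.rightOrthogonal.ι) adjR.counit) Q)
      (@NatIso.isIso_of_isIso_app _ _ _ _ _ _ _ fun _ => hcounit _) ≪≫
    (@asIso _ _ _ _ (Functor.whiskerRight adjL.unit Q)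
      (@NatIso.isIso_of_isIso_app _ _ _ _ _ _ _ hunit)).symm

end MiddleProjection

open ObjectProperty in
theorem isEquivalence_ι_comp_of_isLocalization {X Y S : ObjectProperty T} [X.IsTriangulated]
    [Y.IsTriangulated] (hX : ∀ A, X.extensionProduct X.rightOrthogonal A)
    (hY : ∀ A, Y.leftOrthogonal.extensionProduct Y A) (hYX : Y ≤ X.rightOrthogonal)
    (hXS : X ≤ S) (hYS : Y ≤ S) (hS : S ≤ X.extensionProduct Y)
    {U : Type*} [Category U] (Q : T ⥤ U) [Q.IsLocalization S.trW] :
    ((X.rightOrthogonal ⊓ Y.leftOrthogonal).ι ⋙ Q).IsEquivalence := by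
  have := isRightAdjoint_ι_rightOrthogonal hX
  have := isLeftAdjoint_ι_leftOrthogonal hY
  let adjL := Adjunction.ofIsRightAdjoint X.rightOrthogonal.ι
  let adjR := Adjunction.ofIsLeftAdjoint Y.leftOrthogonal.ι
  have hR (w : T) (hw : X.rightOrthogonal w) :
      X.rightOrthogonal (Y.leftOrthogonal.ι.rightAdjoint.obj w).obj :=
    prop_of_trW hYX (trW_counit_app hY adjR w) hw
  let F := middleProjection X.rightOrthogonal.ι.leftAdjoint _ hR
  have hF : S.trW.IsInvertedBy F := fun _ _ f hf =>
    isIso_middleProjection_map adjL adjR hR hYX (trW_monotone hS f hf)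
  let _ : Localization.Lifting (𝟭 _) (MorphismProperty.isomorphisms _)
      ((X.rightOrthogonal ⊓ Y.leftOrthogonal).ι ⋙ Q)
      ((X.rightOrthogonal ⊓ Y.leftOrthogonal).ι ⋙ Q) := ⟨Functor.leftUnitor _⟩
  exact Localization.isEquivalence (𝟭 _) (MorphismProperty.isomorphisms _) Q S.trW _ _ F
    (Localization.lift F hF Q)
    (Functor.associator _ _ _ ≪≫ Functor.isoWhiskerLeft _ (Localization.fac F hF Q) ≪≫
      ιCompMiddleProjectionIso adjL adjR hR)
    (middleProjectionCompιCompIso adjL adjR hR Q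
      (fun A => Localization.inverts Q S.trW _ (trW_monotone hXS _ (trW_unit_app hX adjL A)))
      (fun A => Localization.inverts Q S.trW _ (trW_monotone hYS _ (trW_counit_app hY adjR A))))

section Sets

section

variable {C : Type*} [Category C]

lemma mem_rightPerp_iff [Preadditive C] {A : Set C} {E : C} :
    E ∈ rightPerp A ↔ ObjectProperty.rightOrthogonal (· ∈ A) E :=
  ⟨fun h _ f ha => h _ ha f, fun h _ ha f => h f ha⟩

lemma mem_leftPerp_iff [Preadditive C] {B : Set C} {E : C} :
    E ∈ leftPerp B ↔ ObjectProperty.leftOrthogonal (· ∈ B) E :=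
  ⟨fun h _ f hb => h _ hb f, fun h _ hb f => h f hb⟩

lemma shift_mem_of_shiftSet_eq [HasShift C ℤ] {A : Set C}
    (hA : ∀ ⦃a b : C⦄, (a ≅ b) → a ∈ A → b ∈ A) (h : shiftSet A 1 = A) :
    ∀ a ∈ A, ∀ n : ℤ, (a⟦n⟧ : C) ∈ A := by
  have h_one (a : C) (ha : a ∈ A) : (a⟦(1 : ℤ)⟧ : C) ∈ A := h ▸ ⟨a, ha, rfl⟩
  have h_neg_one (a : C) (ha : a ∈ A) : (a⟦(-1 : ℤ)⟧ : C) ∈ A := by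
    obtain ⟨b, hb, rfl⟩ : a ∈ shiftSet A 1 := h.symm ▸ ha
    exact hA ((shiftFunctorCompIsoId C (1 : ℤ) (-1) (by omega)).app b).symm hb
  intro a ha n
  induction n using Int.induction_on with
  | zero => exact hA ((shiftFunctorZero C ℤ).app a).symm ha
  | succ i hi => exact hA ((shiftFunctorAdd' C (i : ℤ) 1 (i + 1) rfl).app a).symm (h_one _ hi)
  | pred i hi =>
    exact hA ((shiftFunctorAdd' C (-(i : ℤ)) (-1) (-(i : ℤ) - 1) (by omega)).app a).symm
      (h_neg_one _ hi)

end

lemma mem_starSet_iff {A B : Set T} {E : T} :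
    E ∈ starSet A B ↔ ObjectProperty.extensionProduct (· ∈ A) (· ∈ B) E :=
  ⟨fun ⟨a, b, ha, hb, f, g, h, hT⟩ => ⟨a, b, f, g, h, hT, ha, hb⟩,
    fun ⟨a, b, f, g, h, hT, ha, hb⟩ => ⟨a, b, ha, hb, f, g, h, hT⟩⟩

lemma qis_eq_trW (S : Set T) : qis S = ObjectProperty.trW (· ∈ S) := by
  ext A B f
  exact ⟨fun ⟨C, g, h, hT, hC⟩ => ⟨C, g, h, hT, hC⟩, fun ⟨C, g, h, hT, hC⟩ => ⟨C, g, h, hT, hC⟩⟩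

lemma IsThick.isTriangulated {S : Set T} (hS : IsThick S) :
    ObjectProperty.IsTriangulated (· ∈ S) where
  exists_zero := ⟨0, isZero_zero T, hS.zero⟩
  isStableUnderShiftBy n := ⟨fun A hA => hS.shift A hA n⟩
  ext₂' Tr hTr h₁ h₃ := ObjectProperty.le_isoClosure _ _ (hS.ext₂ Tr hTr h₁ h₃)

lemma IsThick.inter {A B : Set T} (hA : IsThick A) (hB : IsThick B) : IsThick (A ∩ B) where
  zero := ⟨hA.zero, hB.zero⟩
  iso _ _ e h := ⟨hA.iso e h.1, hB.iso e h.2⟩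
  shift E h n := ⟨hA.shift E h.1 n, hB.shift E h.2 n⟩
  ext₂ Tr hTr h₁ h₃ := ⟨hA.ext₂ Tr hTr h₁.1 h₃.1, hB.ext₂ Tr hTr h₁.2 h₃.2⟩
  retract _ _ i r hir h := ⟨hA.retract i r hir h.1, hB.retract i r hir h.2⟩

lemma isThick_rightPerp {A : Set T} (hA : ∀ a ∈ A, ∀ n : ℤ, (a⟦n⟧ : T) ∈ A) :
    IsThick (rightPerp A) where
  zero _ _ f := (isZero_zero T).eq_of_tgt f 0
  iso _ _ e h := mem_rightPerp_iff.2 (ObjectProperty.prop_of_iso _ e (mem_rightPerp_iff.1 h))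
  shift E h n :=
    have : ObjectProperty.IsStableUnderShift (· ∈ A) ℤ := ⟨fun n => ⟨fun a ha => hA a ha n⟩⟩
    mem_rightPerp_iff.2 (ObjectProperty.le_shift _ n E (mem_rightPerp_iff.1 h))
  ext₂ Tr hTr h₁ h₃ a ha f := by
    obtain ⟨g, rfl⟩ := Triangle.coyoneda_exact₂ Tr hTr f (h₃ a ha _)
    rw [h₁ a ha g, zero_comp]
  retract _ _ i r hir h a ha f := by
    rw [← Category.comp_id f, ← hir, ← Category.assoc, h a ha (f ≫ i), zero_comp]

lemma isThick_leftPerp {B : Set T} (hB : ∀ b ∈ B, ∀ n : ℤ, (b⟦n⟧ : T) ∈ B) :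
    IsThick (leftPerp B) where
  zero _ _ f := (isZero_zero T).eq_of_src f 0
  iso _ _ e h := mem_leftPerp_iff.2 (ObjectProperty.prop_of_iso _ e (mem_leftPerp_iff.1 h))
  shift E h n :=
    have : ObjectProperty.IsStableUnderShift (· ∈ B) ℤ := ⟨fun n => ⟨fun b hb => hB b hb n⟩⟩
    mem_leftPerp_iff.2 (ObjectProperty.le_shift _ n E (mem_leftPerp_iff.1 h))
  ext₂ Tr hTr h₁ h₃ b hb f := by
    obtain ⟨g, rfl⟩ := Triangle.yoneda_exact₂ Tr hTr f (h₁ b hb _)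
    rw [h₃ b hb g, comp_zero]
  retract _ _ i r hir h b hb f := by
    rw [← Category.id_comp f, ← hir, Category.assoc, h b hb (r ≫ f), comp_zero]

namespace IsTorsionPair

variable {S X Y : Set T} (h : IsTorsionPair S X Y) (hS : IsThick S)
include h hS

lemma shift_mem_left (hst : shiftSet X 1 = X) : ∀ x ∈ X, ∀ n : ℤ, (x⟦n⟧ : T) ∈ X := by
  refine shift_mem_of_shiftSet_eq (fun a b e ha => ?_) hst
  rw [h.eqA] at ha ⊢
  exact ⟨mem_leftPerp_iff.2 (ObjectProperty.prop_of_iso _ e (mem_leftPerp_iff.1 ha.1)),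
    hS.iso e ha.2⟩

lemma shift_mem_right (hX : ∀ x ∈ X, ∀ n : ℤ, (x⟦n⟧ : T) ∈ X) :
    ∀ y ∈ Y, ∀ n : ℤ, (y⟦n⟧ : T) ∈ Y := by
  intro y hy n
  rw [h.eqB] at hy ⊢
  exact ⟨(isThick_rightPerp hX).shift y hy.1 n, hS.shift y hy.2 n⟩

lemma isThick_left (hY : ∀ y ∈ Y, ∀ n : ℤ, (y⟦n⟧ : T) ∈ Y) : IsThick X :=
  h.eqA ▸ (isThick_leftPerp hY).inter hS

lemma isThick_right (hX : ∀ x ∈ X, ∀ n : ℤ, (x⟦n⟧ : T) ∈ X) : IsThick Y :=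
  h.eqB ▸ (isThick_rightPerp hX).inter hS

end IsTorsionPair

end Sets

/-- If `S = X ⊥ Y` is a stable t-structure (`X[1] = X`), then `X`, `Y`
and `Z = X^⊥ ∩ ^⊥Y` are thick, `P = X[1] ∩ Y = 0`, `T = X ⊥ Z ⊥ Y` is a weak
semi-orthogonal decomposition, and `Z ⊂ T → T/S` is an equivalence. -/
theorem stmt7 {U : Type*} [Category U] (S X Y : Set T) (Q : T ⥤ U)
    [Q.IsLocalization (qis S)] (hS : IsThick S)
    (h1 : IsTorsionPair S X Y) (hst : shiftSet X 1 = X)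
    (h2 : IsTorsionPair Set.univ X (rightPerp X))
    (h3 : IsTorsionPair Set.univ (leftPerp Y) Y) :
    IsThick X ∧ IsThick Y ∧ IsThick (rightPerp X ∩ leftPerp Y) ∧
    (∀ p ∈ shiftSet X 1 ∩ Y, IsZero p) ∧
    homOrth X (rightPerp X ∩ leftPerp Y) ∧ homOrth X Y ∧
    homOrth (rightPerp X ∩ leftPerp Y) Y ∧
    (∀ T₀ : T, T₀ ∈ starSet X (starSet (rightPerp X ∩ leftPerp Y) Y)) ∧
    (ObjectProperty.ι (fun A => A ∈ rightPerp X ∩ leftPerp Y) ⋙ Q).IsEquivalence := by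
  have hXsh := h1.shift_mem_left hS hst
  have hYsh := h1.shift_mem_right hS hXsh
  have hX := h1.isThick_left hS hYsh
  have hY := h1.isThick_right hS hXsh
  have := hX.isTriangulated
  have := hY.isTriangulated
  have hZ : (· ∈ rightPerp X ∩ leftPerp Y) =
      ObjectProperty.rightOrthogonal (· ∈ X) ⊓ ObjectProperty.leftOrthogonal (· ∈ Y) :=
    funext fun _ => propext (and_congr mem_rightPerp_iff mem_leftPerp_iff)
  have hYX : (· ∈ Y) ≤ ObjectProperty.rightOrthogonal (· ∈ X) :=
    fun y hy x f hx => h1.orth x hx y hy f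
  have h2' (A : T) :
      ObjectProperty.extensionProduct (· ∈ X) (ObjectProperty.rightOrthogonal (· ∈ X)) A := by
    simpa only [mem_starSet_iff, mem_rightPerp_iff] using h2.ext (Set.mem_univ A)
  have h3' (A : T) :
      ObjectProperty.extensionProduct (ObjectProperty.leftOrthogonal (· ∈ Y)) (· ∈ Y) A := by
    simpa only [mem_starSet_iff, mem_leftPerp_iff] using h3.ext (Set.mem_univ A)
  refine ⟨hX, hY, (isThick_rightPerp hXsh).inter (isThick_leftPerp hYsh),
    fun p hp => (IsZero.iff_id_eq_zero p).2 (h1.orth p (hst ▸ hp.1) p hp.2 (𝟙 p)),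
    fun x hx z hz f => hz.1 x hx f, h1.orth, fun z hz y hy f => hz.2 y hy f, fun A => ?_, ?_⟩
  · simpa only [mem_starSet_iff, hZ] using extensionProduct_inf_extensionProduct h2' h3' hYX A
  · have : Q.IsLocalization (ObjectProperty.trW (· ∈ S)) := qis_eq_trW S ▸ inferInstance
    rw [hZ]
    exact isEquivalence_ι_comp_of_isLocalization h2' h3' hYX (fun _ hx => h1.subA hx)
      (fun _ hy => h1.subB hy) (fun _ hs => mem_starSet_iff.1 (h1.ext hs)) Q

end IY
end

section
/- Let T be a triangulated category, S a thick subcategory, and suppose S = X ⊥ Y = X' ⊥ Y' are torsion pairs of S and T = X' ⊥ X'^⊥ is a torsion pair of T. If X[n] ⊆ X' for some integer n, then T = X ⊥ X^⊥ is a torsion pair of T. -/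
open CategoryTheory Limits Pretriangulated ZeroObject

namespace IY

variable {T : Type*} [Category T] [Preadditive T] [HasZeroObject T] [HasShift T ℤ]
  [∀ n : ℤ, (shiftFunctor T n).Additive] [Pretriangulated T]

/-!
Shifting a decomposition `E[n] ∈ X' * X'^⊥` back by `-n` gives a triangle `a → E → b → a[1]`
with `a ∈ S` (as `X' ⊆ S`) and `b ∈ X^⊥` (as `X[n] ⊆ X'`). Splitting `a` by the torsion pair
`S = X ⊥ Y` as `x → a → y`, the cone `W` of the composite `x → E` is an extension of `b` by
`y ∈ Y ⊆ X^⊥`, so it lies in `X^⊥`. Hence `T = X * X^⊥`. Finally, if `V ∈ ^⊥(X^⊥)` then the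
map `V → W` in `x → V → W` vanishes, so `V` is a retract of `x ∈ X`, and `X = ^⊥Y ∩ S` is
closed under retracts because `S` is thick.
-/

lemma mem_starSet_of_distTriang {A B : Set T} (Tr : Triangle T) (hTr : Tr ∈ distTriang T)
    (h₁ : Tr.obj₁ ∈ A) (h₃ : Tr.obj₃ ∈ B) : Tr.obj₂ ∈ starSet A B :=
  ⟨_, _, h₁, h₃, Tr.mor₁, Tr.mor₂, Tr.mor₃, hTr⟩

lemma starSet_mono {A A' B B' : Set T} (hA : A ⊆ A') (hB : B ⊆ B') :
    starSet A B ⊆ starSet A' B' := by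
  rintro E ⟨a, b, ha, hb, f, g, h, hTr⟩
  exact ⟨a, b, hA ha, hB hb, f, g, h, hTr⟩

lemma mem_starSet_of_iso {A B : Set T} {E E' : T} (e : E ≅ E') (hE : E ∈ starSet A B) :
    E' ∈ starSet A B := by
  obtain ⟨a, b, ha, hb, f, g, h, hTr⟩ := hE
  refine ⟨a, b, ha, hb, f ≫ e.hom, e.inv ≫ g, h, isomorphic_distinguished _ hTr _ ?_⟩
  exact Triangle.isoMk _ _ (Iso.refl a) e.symm (Iso.refl b)
    (by simp [Triangle.mk]) (by simp [Triangle.mk]) (by simp [Triangle.mk])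

lemma shift_mem_starSet {A B : Set T} {E : T} (hE : E ∈ starSet A B) (m : ℤ) :
    (E⟦m⟧ : T) ∈ starSet (shiftSet A m) (shiftSet B m) := by
  obtain ⟨a, b, ha, hb, f, g, h, hTr⟩ := hE
  exact mem_starSet_of_distTriang _ (Triangle.shift_distinguished _ hTr m)
    ⟨a, ha, rfl⟩ ⟨b, hb, rfl⟩

lemma mem_starSet_of_shift_mem_starSet {A B : Set T} {E : T} {n : ℤ}
    (hE : (E⟦n⟧ : T) ∈ starSet A B) : E ∈ starSet (shiftSet A (-n)) (shiftSet B (-n)) :=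
  mem_starSet_of_iso ((shiftFunctorCompIsoId T n (-n) (add_neg_cancel n)).app E)
    (shift_mem_starSet hE (-n))

lemma shiftSet_subset_of_isThick {S A : Set T} (hS : IsThick S) (hA : A ⊆ S) (n : ℤ) :
    shiftSet A n ⊆ S := by
  rintro _ ⟨a, ha, rfl⟩
  exact hS.shift a (hA ha) n

omit [HasZeroObject T] [Pretriangulated T] in
lemma shiftSet_neg_rightPerp_subset {A B : Set T} {n : ℤ} (hAB : shiftSet A n ⊆ B) :
    shiftSet (rightPerp B) (-n) ⊆ rightPerp A := by
  rintro _ ⟨b, hb, rfl⟩ x hx φ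
  have hφ : φ⟦n⟧' ≫ ((shiftFunctorCompIsoId T (-n) n (neg_add_cancel n)).app b).hom = 0 :=
    hb _ (hAB ⟨x, hx, rfl⟩) _
  apply (shiftFunctor T n).map_injective
  simpa using hφ

lemma eq_zero_of_comp_shift_eq_zero {a E b Z : T} {f : a ⟶ E} {g : E ⟶ b}
    {h : b ⟶ a⟦(1 : ℤ)⟧} (hTr : Triangle.mk f g h ∈ distTriang T) (k : Z ⟶ a⟦(1 : ℤ)⟧)
    (hk : k ≫ f⟦1⟧' = 0) (hb : ∀ t : Z ⟶ b, t = 0) : k = 0 := by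
  obtain ⟨(t : Z ⟶ b), (rfl : k = t ≫ h)⟩ := Triangle.coyoneda_exact₁ _ hTr k hk
  rw [hb t, zero_comp]

/-- With the octahedral axiom this says that `A^⊥` is closed under extensions; without it, the
long exact Hom-sequences of the three triangles are chased directly. -/
lemma cone_comp_mem_rightPerp {A : Set T} {x a y E b W : T}
    {u : x ⟶ a} {p : a ⟶ y} {δ : y ⟶ x⟦(1 : ℤ)⟧} {f : a ⟶ E} {g : E ⟶ b} {h : b ⟶ a⟦(1 : ℤ)⟧}
    {r : E ⟶ W} {s : W ⟶ x⟦(1 : ℤ)⟧}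
    (hu : Triangle.mk u p δ ∈ distTriang T) (hf : Triangle.mk f g h ∈ distTriang T)
    (huf : Triangle.mk (u ≫ f) r s ∈ distTriang T)
    (hy : y ∈ rightPerp A) (hb : b ∈ rightPerp A) : W ∈ rightPerp A := by
  intro x₀ hx₀ w
  have hs : w ≫ s = 0 := by
    have h₃₁ : s ≫ (u ≫ f)⟦1⟧' = 0 := comp_distTriang_mor_zero₃₁ _ huf
    have hsu : (w ≫ s) ≫ u⟦1⟧' = 0 :=
      eq_zero_of_comp_shift_eq_zero hf _ (by simpa using w ≫= h₃₁) (hb x₀ hx₀)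
    exact eq_zero_of_comp_shift_eq_zero hu _ hsu (hy x₀ hx₀)
  obtain ⟨(φ : x₀ ⟶ E), (rfl : w = φ ≫ r)⟩ := Triangle.coyoneda_exact₃ _ huf w hs
  obtain ⟨(ψ : x₀ ⟶ a), (rfl : φ = ψ ≫ f)⟩ := Triangle.coyoneda_exact₂ _ hf φ (hb x₀ hx₀ _)
  obtain ⟨(χ : x₀ ⟶ x), (rfl : ψ = χ ≫ u)⟩ := Triangle.coyoneda_exact₂ _ hu ψ (hy x₀ hx₀ _)
  have h₁₂ : (u ≫ f) ≫ r = 0 := comp_distTriang_mor_zero₁₂ _ huf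
  simpa using χ ≫= h₁₂

lemma IsTorsionPair.subset_rightPerp {S A B : Set T} (h : IsTorsionPair S A B) :
    B ⊆ rightPerp A := fun _ hb x hx f => h.orth x hx _ hb f

lemma IsTorsionPair.mem_starSet_rightPerp {S A B : Set T} (h : IsTorsionPair S A B) {E : T}
    (hE : E ∈ starSet S (rightPerp A)) : E ∈ starSet A (rightPerp A) := by
  obtain ⟨a, b, ha, hb, f, g, k, hf⟩ := hE
  obtain ⟨x, y, hx, hy, u, p, δ, hu⟩ := h.ext ha
  obtain ⟨W, r, s, huf⟩ := distinguished_cocone_triangle (u ≫ f)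
  exact ⟨x, W, hx, cone_comp_mem_rightPerp hu hf huf (h.subset_rightPerp hy) hb, _, r, s, huf⟩

lemma exists_retract_of_mem_starSet_of_mem_leftPerp {A B : Set T} {V : T}
    (hV : V ∈ starSet A B) (hV' : V ∈ leftPerp B) :
    ∃ x ∈ A, ∃ (i : V ⟶ x) (q : x ⟶ V), i ≫ q = 𝟙 V := by
  obtain ⟨x, b, hx, hb, f, g, h, hTr⟩ := hV
  obtain ⟨i, hi⟩ :=
    Triangle.coyoneda_exact₂ _ hTr (𝟙 V) ((Category.id_comp g).trans (hV' b hb g))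
  exact ⟨x, hx, i, f, hi.symm⟩

lemma IsTorsionPair.mem_left_of_retract {S A B : Set T} (hS : IsThick S)
    (h : IsTorsionPair S A B) {V x : T} (hx : x ∈ A) (i : V ⟶ x) (q : x ⟶ V)
    (hiq : i ≫ q = 𝟙 V) : V ∈ A := by
  rw [h.eqA] at hx ⊢
  refine ⟨fun y hy g => ?_, hS.retract i q hiq hx.2⟩
  calc g = i ≫ q ≫ g := by rw [← Category.assoc, hiq, Category.id_comp]
    _ = 0 := by rw [hx.1 y hy (q ≫ g), comp_zero]

lemma isTorsionPair_univ_of_forall_mem_starSet {A : Set T}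
    (hext : ∀ E : T, E ∈ starSet A (rightPerp A)) (hA : leftPerp (rightPerp A) ⊆ A) :
    IsTorsionPair Set.univ A (rightPerp A) where
  subA := Set.subset_univ _
  subB := Set.subset_univ _
  orth _ hx _ hy f := hy _ hx f
  ext E _ := hext E
  eqA := by
    rw [Set.inter_univ]
    exact Set.Subset.antisymm (fun _ hx _ hy f => hy _ hx f) hA
  eqB := (Set.inter_univ _).symm

/-- If `S = X ⊥ Y = X' ⊥ Y'` are torsion pairs of the thick subcategory
`S`, `T = X' ⊥ X'^⊥` is a torsion pair of `T` and `X[n] ⊆ X'` for some `n`, then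
`T = X ⊥ X^⊥` is a torsion pair of `T`. -/
theorem stmt8 (S X Y X' Y' : Set T) (hS : IsThick S)
    (h1 : IsTorsionPair S X Y) (h1' : IsTorsionPair S X' Y')
    (h2 : IsTorsionPair Set.univ X' (rightPerp X'))
    (n : ℤ) (hn : shiftSet X n ⊆ X') :
    IsTorsionPair Set.univ X (rightPerp X) := by
  have hext (E : T) : E ∈ starSet X (rightPerp X) :=
    h1.mem_starSet_rightPerp <|
      starSet_mono (shiftSet_subset_of_isThick hS h1'.subA (-n)) (shiftSet_neg_rightPerp_subset hn)
        (mem_starSet_of_shift_mem_starSet (h2.ext (Set.mem_univ (E⟦n⟧))))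
  refine isTorsionPair_univ_of_forall_mem_starSet hext fun V hV => ?_
  obtain ⟨x, hx, i, q, hiq⟩ := exists_retract_of_mem_starSet_of_mem_leftPerp (hext V) hV
  exact h1.mem_left_of_retract hS hx i q hiq

end IY
end

section
/- Let (T, S, 𝕊, M) be a relative Serre quadruple. Then S has a t-structure S = X ⊥ Y, where X := (M[<0])^⊥ ∩ S and Y := (M[≥0])^⊥. -/
open CategoryTheory Limits Pretriangulated ZeroObject

namespace IY

variable {T : Type*} [Category T] [Preadditive T] [HasZeroObject T] [HasShift T ℤ]
  [∀ n : ℤ, (shiftFunctor T n).Additive] [Pretriangulated T]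

/-- `P[≥0] = ⋃_{i≥0} P[i]`. -/
def nonnegPart (P : Set T) : Set T := {Z | ∃ X ∈ P, ∃ i : ℤ, 0 ≤ i ∧ Z = (X⟦i⟧ : T)}

/-- `P[≤0] = ⋃_{i≤0} P[i]`. -/
def nonposPart (P : Set T) : Set T := {Z | ∃ X ∈ P, ∃ i : ℤ, i ≤ 0 ∧ Z = (X⟦i⟧ : T)}

/-- The thick closure of a class of objects. -/
def thickClosure (P : Set T) : Set T := ⋂₀ {S | IsThick S ∧ P ⊆ S}

/-- `P` is presilting: `Hom(P, P[i]) = 0` for all `i > 0`. -/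
def presilting (P : Set T) : Prop :=
  ∀ X ∈ P, ∀ Y ∈ P, ∀ i : ℤ, 0 < i → ∀ f : X ⟶ (Y⟦i⟧ : T), f = 0

/-- `P[>0]`. -/
def posPart (P : Set T) : Set T := {Z | ∃ X ∈ P, ∃ i : ℤ, 0 < i ∧ Z = (X⟦i⟧ : T)}

/-- `P[<0]`. -/
def negPart (P : Set T) : Set T := {Z | ∃ X ∈ P, ∃ i : ℤ, i < 0 ∧ Z = (X⟦i⟧ : T)}

end IY

namespace IY

open CategoryTheory.Linear

section Dualizing

variable (k : Type*) [Field k] (A : Type*) [Category A] [Preadditive A]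
  [CategoryTheory.Linear k A]

/-- The functor `Y ↦ D Hom(Y, X)` (covariant in `Y`). -/
def dualHomInto (X : A) : A ⥤ ModuleCat k where
  obj Y := ModuleCat.of k (Module.Dual k (Y ⟶ X))
  map {Y Y'} f := ModuleCat.ofHom (LinearMap.dualMap (leftComp k X f))
  map_id Y := ModuleCat.hom_ext <| LinearMap.ext fun (φ : Module.Dual k (Y ⟶ X)) => LinearMap.ext fun f =>
    congrArg φ (Category.id_comp f)
  map_comp {Y Y' Y''} f g := ModuleCat.hom_ext <| LinearMap.ext fun (φ : Module.Dual k (Y ⟶ X)) =>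
    LinearMap.ext fun h => congrArg φ (Category.assoc f g h)

/-- The functor `Y ↦ D Hom(X, Y)` (contravariant in `Y`). -/
def dualHomFrom (X : A) : Aᵒᵖ ⥤ ModuleCat k where
  obj Y := ModuleCat.of k (Module.Dual k (X ⟶ Y.unop))
  map {Y Y'} f := ModuleCat.ofHom (LinearMap.dualMap (rightComp k X f.unop))
  map_id Y := ModuleCat.hom_ext <| LinearMap.ext fun (φ : Module.Dual k (X ⟶ Y.unop)) => LinearMap.ext fun f =>
    congrArg φ (Category.comp_id f)
  map_comp {Y Y' Y''} f g := ModuleCat.hom_ext <| LinearMap.ext fun (φ : Module.Dual k (X ⟶ Y.unop)) =>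
    LinearMap.ext fun h => congrArg φ (Category.assoc h g.unop f.unop).symm

/-- A contravariant functor `A^op ⥤ mod k` is finitely presented if it is a cokernel of
a morphism of representable functors. -/
def finPresContra (F : Aᵒᵖ ⥤ ModuleCat k) : Prop :=
  ∃ (M₁ M₂ : A) (α : (linearYoneda k A).obj M₁ ⟶ (linearYoneda k A).obj M₂)
    (π : (linearYoneda k A).obj M₂ ⟶ F),
    (∀ X : Aᵒᵖ, Function.Surjective (π.app X)) ∧
    (∀ (X : Aᵒᵖ) (y : ((linearYoneda k A).obj M₂).obj X),
      π.app X y = 0 ↔ ∃ z, α.app X z = y)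

/-- A covariant functor `A ⥤ mod k` is finitely presented if it is a cokernel of
a morphism of corepresentable functors. -/
def finPresCov (F : A ⥤ ModuleCat k) : Prop :=
  ∃ (M₁ M₂ : A) (α : (linearCoyoneda k A).obj (Opposite.op M₁) ⟶
      (linearCoyoneda k A).obj (Opposite.op M₂))
    (π : (linearCoyoneda k A).obj (Opposite.op M₂) ⟶ F),
    (∀ X : A, Function.Surjective (π.app X)) ∧
    (∀ (X : A) (y : (((linearCoyoneda k A).obj (Opposite.op M₂)).obj X : Type _)),
      π.app X y = 0 ↔ ∃ z, α.app X z = y)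

/-- A dualizing `k`-variety: a Hom-finite `k`-category such that the `k`-duals of
representable functors (in both variances) are finitely presented. -/
def IsDualizingVariety : Prop :=
  (∀ X Y : A, FiniteDimensional k (X ⟶ Y)) ∧
  (∀ X : A, finPresCov k A (dualHomInto k A X)) ∧
  (∀ X : A, finPresContra k A (dualHomFrom k A X))

end Dualizing

variable (k : Type*) [Field k]
variable (T : Type*) [Category T] [Preadditive T] [CategoryTheory.Linear k T]
  [HasZeroObject T] [HasShift T ℤ] [∀ n : ℤ, (shiftFunctor T n).Additive]
  [Pretriangulated T]

/-- A relative Serre quadruple `(T, S, 𝕊, M)`. -/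
structure RelSerreQuad where
  /-- (RS0) `T` is Hom-finite. -/
  homFinite : ∀ A B : T, FiniteDimensional k (A ⟶ B)
  /-- (RS0) `T` is Krull–Schmidt (being Hom-finite, this means idempotent complete). -/
  krullSchmidt : IsIdempotentComplete T
  /-- The thick subcategory `S`. -/
  S : Set T
  thickS : IsThick S
  /-- The relative Serre functor `𝕊 : S → S`. -/
  SS : ObjectProperty.FullSubcategory (fun A => A ∈ S) ⥤ ObjectProperty.FullSubcategory (fun A => A ∈ S)
  SSequiv : SS.IsEquivalence
  /-- (RS1) the bifunctorial isomorphism `D Hom_T(X, Y) ≅ Hom_T(Y, 𝕊X)` for `X ∈ S`. -/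
  serre : ∀ (A : ObjectProperty.FullSubcategory (fun A => A ∈ S)) (B : T),
    (B ⟶ (SS.obj A).obj) ≃ₗ[k] Module.Dual k (A.obj ⟶ B)
  serre_natB : ∀ (A : ObjectProperty.FullSubcategory (fun A => A ∈ S)) (B B' : T) (g : B ⟶ B')
      (φ : B' ⟶ (SS.obj A).obj) (f : A.obj ⟶ B),
    serre A B (g ≫ φ) f = serre A B' φ (f ≫ g)
  serre_natA : ∀ (A A' : ObjectProperty.FullSubcategory (fun A => A ∈ S)) (u : A' ⟶ A) (B : T)
      (φ : B ⟶ (SS.obj A').obj) (f : A.obj ⟶ B),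
    serre A B (φ ≫ (SS.map u).hom) f
      = serre A' B φ ((ObjectProperty.ι (fun A => A ∈ S)).map u ≫ f)
  /-- The silting subcategory `M`. -/
  M : Set T
  presiltingM : presilting M
  siltingM : thickClosure M = Set.univ
  /-- (RS2) the t-structure `T = (M[<0])^⊥ ⊥ (M[≥0])^⊥`. -/
  tstr : IsTorsionPair Set.univ (rightPerp (negPart M)) (rightPerp (nonnegPart M))
  tstr_shift : shiftSet (rightPerp (negPart M)) 1 ⊆ rightPerp (negPart M)
  /-- (RS2) `(M[≥0])^⊥ ⊆ S`. -/
  aisle_sub : rightPerp (nonnegPart M) ⊆ S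
  /-- (RS2) `M` is a dualizing `k`-variety. -/
  dualizingM : IsDualizingVariety k (ObjectProperty.FullSubcategory (fun A => A ∈ M))

/-!
The t-structure of `S` is the restriction of the t-structure `T = X ⊥ Y` of `T`.
Since `Y ⊆ S` and `S` is thick, the truncation triangle `a → E → b → a[1]` of an object
`E ∈ S` lies entirely in `S`. Conversely, if `E ∈ S` is right orthogonal to `X ∩ S`, the map
`a → E` vanishes, so every map from `X` to `E` factors through it and `E ∈ X^⊥ = Y`.
-/

section Restriction

variable {T}

lemma IsThick.obj₁_mem {S : Set T} (hS : IsThick S) (Tr : Triangle T)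
    (hTr : Tr ∈ distTriang T) (h₂ : Tr.obj₂ ∈ S) (h₃ : Tr.obj₃ ∈ S) : Tr.obj₁ ∈ S :=
  hS.ext₂ Tr.invRotate (inv_rot_of_distTriang _ hTr) (hS.shift _ h₃ (-1)) h₂

lemma obj₂_mem_rightPerp_of_mor₁_eq_zero {A : Set T} (Tr : Triangle T)
    (hTr : Tr ∈ distTriang T) (h₁ : Tr.mor₁ = 0) (h₃ : Tr.obj₃ ∈ rightPerp A) :
    Tr.obj₂ ∈ rightPerp A := by
  intro X hX φ
  obtain ⟨ψ, rfl⟩ := Triangle.coyoneda_exact₂ Tr hTr φ (h₃ X hX _)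
  rw [h₁, comp_zero]

lemma shiftSet_inter_subset {X S : Set T} {n : ℤ} (hX : shiftSet X n ⊆ X) (hS : IsThick S) :
    shiftSet (X ∩ S) n ⊆ X ∩ S := by
  rintro _ ⟨x, ⟨hxX, hxS⟩, rfl⟩
  exact ⟨hX ⟨x, hxX, rfl⟩, hS.shift x hxS n⟩

lemma IsTorsionPair.restrict {S X Y : Set T} (hXY : IsTorsionPair Set.univ X Y)
    (hS : IsThick S) (hYS : Y ⊆ S) : IsTorsionPair S (X ∩ S) Y := by
  have truncation : S ⊆ starSet (X ∩ S) Y := by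
    intro E hE
    obtain ⟨a, b, ha, hb, f, g, h, hT⟩ := hXY.ext (Set.mem_univ E)
    exact ⟨a, b, ⟨ha, hS.obj₁_mem _ hT hE (hYS hb)⟩, hb, f, g, h, hT⟩
  refine ⟨Set.inter_subset_right, hYS, fun x hx y hy f => hXY.orth x hx.1 y hy f,
    truncation, by rw [hXY.eqA, Set.inter_univ], ?_⟩
  refine Set.Subset.antisymm (fun y hy => ⟨?_, hYS hy⟩) fun E ⟨hE, hES⟩ => ?_
  · rw [hXY.eqB, Set.inter_univ] at hy
    exact fun x hx f => hy x hx.1 f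
  · obtain ⟨a, b, ha, hb, f, g, h, hT⟩ := truncation hES
    rw [hXY.eqB, Set.inter_univ] at hb ⊢
    exact obj₂_mem_rightPerp_of_mor₁_eq_zero _ hT (hE a ha f) hb

end Restriction

/-- For a relative Serre quadruple `(T, S, 𝕊, M)`, `S` has a
t-structure `S = X ⊥ Y` with `X = (M[<0])^⊥ ∩ S` and `Y = (M[≥0])^⊥`. -/
theorem stmt18 (R : RelSerreQuad k T) :
    IsTorsionPair R.S (rightPerp (negPart R.M) ∩ R.S) (rightPerp (nonnegPart R.M)) ∧
    shiftSet (rightPerp (negPart R.M) ∩ R.S) 1 ⊆ rightPerp (negPart R.M) ∩ R.S :=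
  ⟨R.tstr.restrict R.thickS R.aisle_sub, shiftSet_inter_subset R.tstr_shift R.thickS⟩

end IY
end
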